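/- Let q = 2^m ≥ 8 and k = q − 2. Then u ∈ 𝔽_q^q is a deep hole of TRS_{q-2}(𝔽_q, θ) if and only if u = u_f for some f(x) = w_0 x^{q-1} + w_1 x^{q-2} + g(x) with g ∈ S_{q-2,θ} and w_0, w_1 ∈ 𝔽_q satisfying: either w_0 = 0 and w_1 ≠ 0, or w_0 ≠ 0 and Tr(w_1 θ / w_0) = 1, where Tr : 𝔽_q → 𝔽_2 is the absolute trace map. -/

import Mathlib

open Polynomial Finset

/-- The set `S_{k,θ}` of twisted polynomials
`Σ_{i=0}^{k-2} f_i x^i + f_{k-1}(x^{k-1} + θ x^k)`. -/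
def Sset (F : Type*) [Field F] (k : ℕ) (θ : F) : Set (Polynomial F) :=
  {p | ∃ f : ℕ → F, p = (∑ i ∈ Finset.range (k - 1), Polynomial.C (f i) * Polynomial.X ^ i)
        + Polynomial.C (f (k - 1)) * (Polynomial.X ^ (k - 1) + Polynomial.C θ * Polynomial.X ^ k)}

/-- The twisted Reed–Solomon code `TRS_k(A, θ)` for the evaluation sequence `α`. -/
def TRS {F : Type*} [Field F] {n : ℕ} (α : Fin n → F) (k : ℕ) (θ : F) : Set (Fin n → F) :=
  {v | ∃ p ∈ Sset F k θ, v = fun j => p.eval (α j)}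

/-- The (Hamming) error distance `d(u, C)` from a word `u` to a code `C`. -/
noncomputable def distTo {F : Type*} [DecidableEq F] {n : ℕ} (u : Fin n → F)
    (C : Set (Fin n → F)) : ℕ :=
  sInf {d | ∃ c ∈ C, hammingDist u c = d}

/-- The covering radius `ρ(C) = max_u d(u, C)` of a code `C`. -/
noncomputable def covRad {F : Type*} [DecidableEq F] {n : ℕ} (C : Set (Fin n → F)) : ℕ :=
  sSup {d | ∃ u, distTo u C = d}

/-- `u` is a deep hole of `C` if `d(u, C) = ρ(C)`. -/
def IsDeepHole {F : Type*} [DecidableEq F] {n : ℕ} (C : Set (Fin n → F)) (u : Fin n → F) :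
    Prop :=
  distTo u C = covRad C

/-- The column vector `c_{r,θ}(a) = (1, a, …, a^{r-2}, a^{r-1} - θ a^r)ᵀ ∈ 𝔽_q^r`. -/
def crv (F : Type*) [Field F] (r : ℕ) (θ a : F) : Fin r → F :=
  fun i => if (i : ℕ) = r - 1 then a ^ (r - 1) - θ * a ^ r else a ^ (i : ℕ)

/-- The parity-check matrix `H` whose `j`-th column is `c_{r,θ}(α_j)`. -/
def Hmat {F : Type*} [Field F] {n : ℕ} (r : ℕ) (θ : F) (α : Fin n → F) :
    Matrix (Fin r) (Fin n) F :=
  Matrix.of fun i j => crv F r θ (α j) i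

/-!
`TRS_{q-2}(𝔽_q, θ)` is the kernel of the `2 × q` parity-check matrix `H` whose columns are
`(1, a - θ a²)`, `a ∈ 𝔽_q`: this follows from `∑_{a ∈ 𝔽_q} a ^ i = -[i = q - 1]` for
`i < 2 (q - 1)`. So `d(u, TRS)` is the least weight of an `e` with `H e = H u`. Every syndrome is
a combination of the columns at `0` and at some `a` with `a - θ a² ≠ 0`, so the covering radius is
`2`, and `u` is a deep hole iff its syndrome `(s₀, s₁)` is no multiple of a single column, i.e.
`s₁ ≠ s₀ (a - θ a²)` for all `a`. For `s₀ ≠ 0` the substitution `b = θ a` turns this into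
`b² + b ≠ s₁ θ / s₀`, and in characteristic two the image of `b ↦ b² + b` is the kernel of the
absolute trace. Finally the word `u_f` of `f = w₀ x^{q-1} + w₁ x^{q-2} + g`, `g ∈ S_{q-2,θ}`, has
syndrome `-(w₀, w₁)`.
-/

open Matrix

namespace FiniteField

variable {K : Type*} [Field K] [Fintype K]

theorem sum_pow_of_lt_two_mul_card_sub_one {i : ℕ} (hi : i < 2 * (Fintype.card K - 1)) :
    ∑ x : K, x ^ i = if i = Fintype.card K - 1 then -1 else 0 := by
  classical
  set q := Fintype.card K
  have hq : 1 < q := Fintype.one_lt_card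
  rcases lt_trichotomy i (q - 1) with hlt | rfl | hgt
  · rw [sum_pow_lt_card_sub_one K i hlt, if_neg hlt.ne]
  · rw [if_pos rfl, ← Finset.sum_erase_add _ _ (Finset.mem_univ 0), zero_pow (by omega), add_zero,
      Finset.sum_congr rfl fun x hx => pow_card_sub_one_eq_one x (Finset.ne_of_mem_erase hx),
      Finset.sum_const, Finset.card_erase_of_mem (Finset.mem_univ _), Finset.card_univ,
      nsmul_one, Nat.cast_pred (by omega), cast_card_eq_zero, zero_sub]
  · have hlow (x : K) : x ^ i = x ^ (i - (q - 1)) := by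
      calc x ^ i = x ^ (i - q) * x ^ q := by rw [← pow_add, Nat.sub_add_cancel (by omega)]
        _ = x ^ (i - (q - 1)) := by rw [pow_card, ← pow_succ]; congr 1; omega
    rw [Finset.sum_congr rfl fun x _ => hlow x, sum_pow_lt_card_sub_one K _ (by omega),
      if_neg hgt.ne']

theorem sum_eval_eq_neg_coeff {p : K[X]} (hp : p.natDegree < 2 * (Fintype.card K - 1)) :
    ∑ x : K, p.eval x = -p.coeff (Fintype.card K - 1) := by
  have hq : 1 < Fintype.card K := Fintype.one_lt_card
  simp_rw [eval_eq_sum_range' hp, Finset.sum_comm (γ := K), ← Finset.mul_sum]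
  rw [Finset.sum_congr rfl fun i hi =>
    by rw [sum_pow_of_lt_two_mul_card_sub_one (Finset.mem_range.1 hi)]]
  simp only [mul_ite, mul_neg, mul_one, mul_zero, Finset.sum_ite_eq', Finset.mem_range]
  rw [if_pos (by omega)]

end FiniteField

section Hamming

variable {ι β : Type*} [Fintype ι] [DecidableEq β]

theorem hammingNorm_single_le [DecidableEq ι] [Zero β] (i : ι) (b : β) :
    hammingNorm (Pi.single i b : ι → β) ≤ 1 :=
  (Finset.card_le_card (t := {i}) fun j hj => Finset.mem_singleton.2 <| by
    by_contra h
    simp [Pi.single_eq_of_ne h] at hj).trans_eq (Finset.card_singleton i)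

theorem hammingNorm_add_le [AddZeroClass β] (x y : ι → β) :
    hammingNorm (x + y) ≤ hammingNorm x + hammingNorm y := by
  classical
  refine (Finset.card_le_card fun i hi => ?_).trans (Finset.card_union_le _ _)
  simp only [Finset.mem_filter, Finset.mem_univ, true_and, Finset.mem_union] at hi ⊢
  by_contra! h
  simp [h.1, h.2] at hi

theorem hammingNorm_le_one_iff [DecidableEq ι] [Nonempty ι] [Zero β] {x : ι → β} :
    hammingNorm x ≤ 1 ↔ ∃ i b, x = (Pi.single i b : ι → β) := by
  refine ⟨fun hx => ?_, fun ⟨i, b, hx⟩ => hx ▸ hammingNorm_single_le i b⟩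
  obtain ⟨i, hi⟩ := Finset.card_le_one_iff_subset_singleton.1 hx
  refine ⟨i, x i, funext fun j => ?_⟩
  rcases eq_or_ne j i with rfl | hj
  · simp
  · rw [Pi.single_eq_of_ne hj]
    by_contra h
    exact hj (Finset.mem_singleton.1 (hi (by simpa using h)))

end Hamming

section LinearCode

variable {R : Type*} [CommRing R] [DecidableEq R] {m : Type*} {n : ℕ}

theorem distTo_setOf_mulVec_eq_zero_le_iff (H : Matrix m (Fin n) R) (u : Fin n → R) (d : ℕ) :
    distTo u {v | H *ᵥ v = 0} ≤ d ↔ ∃ e, H *ᵥ e = H *ᵥ u ∧ hammingNorm e ≤ d := by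
  have hdist (e : Fin n → R) : hammingDist u (u - e) = hammingNorm e := by
    rw [hammingDist_comm, hammingDist_eq_hammingNorm, neg_sub, sub_add_cancel]
  constructor
  · intro h
    obtain ⟨c, hc, hcd⟩ := Nat.sInf_mem (s := {d | ∃ c ∈ {v | H *ᵥ v = 0}, hammingDist u c = d})
      ⟨_, 0, by simp, rfl⟩
    refine ⟨u - c, ?_, ?_⟩
    · rw [mulVec_sub, Set.mem_ofPred.1 hc, sub_zero]
    · rw [← hdist, sub_sub_cancel, hcd]; exact h
  · rintro ⟨e, he, hed⟩
    refine (Nat.sInf_le ?_).trans hed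
    refine ⟨u - e, ?_, hdist e⟩
    rw [Set.mem_ofPred, mulVec_sub, he, sub_self]

theorem exists_mulVec_eq_hammingNorm_le_one_iff [Nonempty (Fin n)] (H : Matrix m (Fin n) R)
    (s : m → R) :
    (∃ e, H *ᵥ e = s ∧ hammingNorm e ≤ 1) ↔ ∃ j, ∃ c : R, s = c • H.col j := by
  simp only [hammingNorm_le_one_iff]
  constructor
  · rintro ⟨_, rfl, j, c, rfl⟩
    exact ⟨j, c, by simp [op_smul_eq_smul]⟩
  · rintro ⟨j, c, rfl⟩
    exact ⟨_, by simp [op_smul_eq_smul], j, c, rfl⟩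

end LinearCode

theorem isDeepHole_iff_not_distTo_le {F : Type*} [DecidableEq F] {n : ℕ} {C : Set (Fin n → F)}
    {r : ℕ}     (hle : ∀ u, distTo u C ≤ r + 1) (hex : ∃ u, ¬ distTo u C ≤ r) (u : Fin n → F) :
    IsDeepHole C u ↔ ¬ distTo u C ≤ r := by
  have hbdd : BddAbove {d | ∃ u, distTo u C = d} := ⟨r + 1, by rintro _ ⟨u, rfl⟩; exact hle u⟩
  obtain ⟨v, hv⟩ := hex
  have hcov : covRad C = r + 1 :=
    le_antisymm (csSup_le ⟨_, v, rfl⟩ (by rintro _ ⟨u, rfl⟩; exact hle u))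
      ((show r + 1 ≤ distTo v C by have := hle v; omega).trans (le_csSup hbdd ⟨v, rfl⟩))
  rw [IsDeepHole, hcov]
  have := hle u
  omega

theorem mem_Sset_iff {F : Type*} [Field F] {k : ℕ} (hk : 1 ≤ k) {θ : F} {p : F[X]} :
    p ∈ Sset F k θ ↔ p.natDegree ≤ k ∧ p.coeff k = θ * p.coeff (k - 1) := by
  obtain ⟨t, rfl⟩ : ∃ t, k = t + 1 := ⟨k - 1, by omega⟩
  simp only [Sset, Set.mem_ofPred_eq, Nat.add_sub_cancel]
  constructor
  · rintro ⟨f, rfl⟩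
    have hcoeff (n : ℕ) (hn : t ≤ n) :
        ((∑ i ∈ range t, C (f i) * X ^ i) + C (f t) * (X ^ t + C θ * X ^ (t + 1))).coeff n =
          f t * ((if n = t then 1 else 0) + θ * if n = t + 1 then 1 else 0) := by
      simp only [coeff_add, finsetSum_coeff, coeff_C_mul, coeff_X_pow]
      rw [Finset.sum_eq_zero fun i hi => by rw [if_neg (by simp at hi; omega), mul_zero], zero_add]
    refine ⟨natDegree_le_iff_coeff_eq_zero.2 fun n hn => ?_, ?_⟩
    · rw [hcoeff n (by omega), if_neg (by omega), if_neg (by omega)]; ring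
    · rw [hcoeff _ le_rfl, hcoeff _ (by omega), if_neg (by omega), if_pos rfl, if_pos rfl,
        if_neg (by omega)]
      ring
  · rintro ⟨hdeg, hcoeff⟩
    refine ⟨p.coeff, ?_⟩
    conv_lhs => rw [p.as_sum_range_C_mul_X_pow' (n := t + 2) (by omega)]
    rw [sum_range_succ, sum_range_succ, hcoeff, map_mul]
    ring

theorem coeff_X_sub_C_mul_X_sq_mul {R : Type*} [CommRing R] (θ : R) {p : R[X]} {m : ℕ}
    (hm : 2 ≤ m) :
    ((X - C θ * X ^ 2) * p).coeff m = p.coeff (m - 1) - θ * p.coeff (m - 2) := by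
  obtain ⟨m, rfl⟩ : ∃ k, m = k + 2 := ⟨m - 2, by omega⟩
  rw [sub_mul, coeff_sub, mul_assoc, coeff_C_mul, coeff_X_pow_mul, show m + 2 = m + 1 + 1 by rfl,
    coeff_X_mul]
  rfl

section TwistedRS

variable {F : Type*} [Field F] {n : ℕ} {α : Fin n → F} (θ : F)

theorem crv_two (a : F) : crv F 2 θ a = ![1, a - θ * a ^ 2] := by
  ext i; fin_cases i <;> simp [crv]

theorem Hmat_two_mulVec_apply (v : Fin n → F) (i : Fin 2) :
    (Hmat 2 θ α *ᵥ v) i = ∑ j, crv F 2 θ (α j) i * v j := rfl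

theorem exists_natDegree_lt_eval_eq (hα : α.Bijective) (v : Fin n → F) :
    ∃ p : F[X], p.natDegree < n ∧ v = fun j => p.eval (α j) := by
  classical
  have hinj : Set.InjOn α (univ : Finset (Fin n)) := hα.injective.injOn
  set p := Lagrange.interpolate univ α v
  refine ⟨p, ?_, funext fun j => (Lagrange.eval_interpolate_at_node v hinj (mem_univ j)).symm⟩
  rcases eq_or_ne p 0 with h | h
  · rw [h, natDegree_zero]
    exact (hα.surjective 0).choose.pos
  · rw [natDegree_lt_iff_degree_lt h]
    have := Lagrange.degree_interpolate_lt (r := v) hinj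
    rwa [card_univ, Fintype.card_fin] at this

theorem exists_Hmat_two_mulVec_eq_hammingNorm_le_one_iff [DecidableEq F] (hα : α.Bijective)
    (s : Fin 2 → F) :
    (∃ e, Hmat 2 θ α *ᵥ e = s ∧ hammingNorm e ≤ 1) ↔ ∃ a, s 1 = s 0 * (a - θ * a ^ 2) := by
  have : Nonempty (Fin n) := ⟨(hα.surjective 0).choose⟩
  rw [exists_mulVec_eq_hammingNorm_le_one_iff, hα.surjective.exists]
  simp only [col, Hmat, crv_two]
  constructor
  · rintro ⟨a, c, rfl⟩
    exact ⟨a, by simp⟩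
  · rintro ⟨a, ha⟩
    refine ⟨a, s 0, funext fun i => ?_⟩
    fin_cases i <;> simp [ha]

variable [Fintype F]

theorem Hmat_two_mulVec_eval (hα : α.Bijective) (hF : 4 ≤ Fintype.card F) {p : F[X]}
    (hp : p.natDegree < Fintype.card F) :
    Hmat 2 θ α *ᵥ (fun j => p.eval (α j)) =
      -![p.coeff (Fintype.card F - 1),
        p.coeff (Fintype.card F - 2) - θ * p.coeff (Fintype.card F - 3)] := by
  ext i; fin_cases i
  · calc (Hmat 2 θ α *ᵥ fun j => p.eval (α j)) 0 = ∑ j, p.eval (α j) := by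
          simp [Hmat_two_mulVec_apply, crv_two]
      _ = ∑ x, p.eval x := hα.sum_comp (fun x => p.eval x)
      _ = -p.coeff (Fintype.card F - 1) := FiniteField.sum_eval_eq_neg_coeff (by omega)
  · have hdeg : ((X - C θ * X ^ 2) * p).natDegree < 2 * (Fintype.card F - 1) := by
      refine (natDegree_mul_le).trans_lt ?_
      have : (X - C θ * X ^ 2 : F[X]).natDegree ≤ 2 := by compute_degree
      omega
    calc (Hmat 2 θ α *ᵥ fun j => p.eval (α j)) 1 = ∑ j, ((X - C θ * X ^ 2) * p).eval (α j) := by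
          simp [Hmat_two_mulVec_apply, crv_two]
      _ = ∑ x, ((X - C θ * X ^ 2) * p).eval x :=
          hα.sum_comp (fun x => ((X - C θ * X ^ 2) * p).eval x)
      _ = -(p.coeff (Fintype.card F - 2) - θ * p.coeff (Fintype.card F - 3)) := by
          rw [FiniteField.sum_eval_eq_neg_coeff hdeg, coeff_X_sub_C_mul_X_sq_mul θ (by omega)]
          rfl

theorem Hmat_two_mulVec_eval_eq_zero_iff (hα : α.Bijective) (hF : 4 ≤ Fintype.card F)
    {p : F[X]} (hp : p.natDegree < Fintype.card F) :
    Hmat 2 θ α *ᵥ (fun j => p.eval (α j)) = 0 ↔ p ∈ Sset F (Fintype.card F - 2) θ := by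
  rw [Hmat_two_mulVec_eval θ hα hF hp, neg_eq_zero, mem_Sset_iff (by omega),
    show Fintype.card F - 2 - 1 = Fintype.card F - 3 by omega]
  simp only [Matrix.cons_eq_zero_iff, Matrix.zero_empty, sub_eq_zero, and_true]
  constructor
  · rintro ⟨hlead, hcoeff⟩
    exact ⟨(natDegree_le_pred (by omega) hlead).trans (by omega), hcoeff⟩
  · rintro ⟨hdeg, hcoeff⟩
    exact ⟨coeff_eq_zero_of_natDegree_lt (by omega), hcoeff⟩

theorem mem_TRS_iff (hα : α.Bijective) (hF : 4 ≤ Fintype.card F) (v : Fin n → F) :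
    v ∈ TRS α (Fintype.card F - 2) θ ↔ Hmat 2 θ α *ᵥ v = 0 := by
  have hn : n = Fintype.card F := by simpa using Fintype.card_of_bijective hα
  obtain ⟨p, hp, rfl⟩ := exists_natDegree_lt_eval_eq hα v
  rw [Hmat_two_mulVec_eval_eq_zero_iff θ hα hF (hn ▸ hp)]
  refine ⟨fun ⟨g, hg, hpg⟩ => ?_, fun hp => ⟨p, hp, rfl⟩⟩
  have hg' : g.natDegree < Fintype.card F := ((mem_Sset_iff (by omega)).1 hg).1.trans_lt (by omega)
  rwa [← Hmat_two_mulVec_eval_eq_zero_iff θ hα hF (hn ▸ hp), hpg,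
    Hmat_two_mulVec_eval_eq_zero_iff θ hα hF hg']

theorem Hmat_two_mulVec_eq_neg_iff (hα : α.Bijective) (hF : 4 ≤ Fintype.card F)
    (u : Fin n → F) (w₀ w₁ : F) :
    Hmat 2 θ α *ᵥ u = -![w₀, w₁] ↔ ∃ g ∈ Sset F (Fintype.card F - 2) θ,
      u = fun j =>
        (C w₀ * X ^ (Fintype.card F - 1) + C w₁ * X ^ (Fintype.card F - 2) + g).eval (α j) := by
  set h : F[X] := C w₀ * X ^ (Fintype.card F - 1) + C w₁ * X ^ (Fintype.card F - 2)
  have hh : Hmat 2 θ α *ᵥ (fun j => h.eval (α j)) = -![w₀, w₁] := by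
    have hdeg : h.natDegree < Fintype.card F := by
      unfold h; compute_degree; omega
    rw [Hmat_two_mulVec_eval θ hα hF hdeg]
    simp [h, coeff_X_pow, show Fintype.card F - 2 ≠ Fintype.card F - 1 by omega,
      show Fintype.card F - 3 ≠ Fintype.card F - 1 by omega,
      show Fintype.card F - 3 ≠ Fintype.card F - 2 by omega,
      show Fintype.card F - 1 ≠ Fintype.card F - 2 by omega]
  rw [← sub_eq_zero, ← hh, ← mulVec_sub, ← mem_TRS_iff θ hα hF]
  simp only [eval_add]
  constructor
  · rintro ⟨g, hg, hug⟩
    refine ⟨g, hg, funext fun j => ?_⟩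
    rw [← congrFun hug j, Pi.sub_apply, add_sub_cancel]
  · rintro ⟨g, hg, rfl⟩
    exact ⟨g, hg, by ext j; simp⟩

theorem exists_Hmat_two_mulVec_eq_hammingNorm_le_two [DecidableEq F] (hα : α.Bijective)
    (hF : 2 < Fintype.card F) (s : Fin 2 → F) :
    ∃ e, Hmat 2 θ α *ᵥ e = s ∧ hammingNorm e ≤ 2 := by
  obtain ⟨a, -, ha⟩ := Finset.exists_mem_notMem_of_card_lt_card (s := {0, θ⁻¹}) (t := univ)
    ((Finset.card_le_two).trans_lt (by simpa using hF))
  simp only [Finset.mem_insert, Finset.mem_singleton, not_or] at ha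
  have ht : a - θ * a ^ 2 ≠ 0 := by
    rw [show a - θ * a ^ 2 = a * (1 - θ * a) by ring]
    exact mul_ne_zero ha.1 (sub_ne_zero.2 fun h => ha.2 (eq_inv_of_mul_eq_one_right h.symm))
  obtain ⟨j₀, hj₀⟩ := hα.surjective 0
  obtain ⟨j₁, hj₁⟩ := hα.surjective a
  set c := s 1 / (a - θ * a ^ 2)
  refine ⟨Pi.single j₀ (s 0 - c) + Pi.single j₁ c, ?_, ?_⟩
  · ext i
    fin_cases i
    · simp [mulVec_add, col, Hmat, crv_two, hj₀, hj₁, c]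
    · simp [mulVec_add, col, Hmat, crv_two, hj₀, hj₁, c]
      rw [mul_comm, mul_assoc, inv_mul_cancel₀ ht, mul_one]
  · exact (hammingNorm_add_le _ _).trans
      (add_le_add (hammingNorm_single_le _ _) (hammingNorm_single_le _ _))

theorem isDeepHole_TRS_iff [DecidableEq F] (hα : α.Bijective) (hF : 4 ≤ Fintype.card F)
    (u : Fin n → F) :
    IsDeepHole (TRS α (Fintype.card F - 2) θ) u ↔
      ¬ ∃ a, (Hmat 2 θ α *ᵥ u) 1 = (Hmat 2 θ α *ᵥ u) 0 * (a - θ * a ^ 2) := by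
  have hTRS : TRS α (Fintype.card F - 2) θ = {v | Hmat 2 θ α *ᵥ v = 0} :=
    Set.ext (mem_TRS_iff θ hα hF)
  simp only [hTRS]
  rw [isDeepHole_iff_not_distTo_le (r := 1), distTo_setOf_mulVec_eq_zero_le_iff,
    exists_Hmat_two_mulVec_eq_hammingNorm_le_one_iff θ hα]
  · intro v
    rw [distTo_setOf_mulVec_eq_zero_le_iff]
    exact exists_Hmat_two_mulVec_eq_hammingNorm_le_two θ hα (by omega) _
  · obtain ⟨v, hv, -⟩ := exists_Hmat_two_mulVec_eq_hammingNorm_le_two θ hα (by omega) ![0, 1]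
    refine ⟨v, ?_⟩
    rw [distTo_setOf_mulVec_eq_zero_le_iff,
      exists_Hmat_two_mulVec_eq_hammingNorm_le_one_iff θ hα, hv]
    simp

end TwistedRS

theorem FiniteField.trace_algebra_pow_card {K L : Type*} [Field K] [Fintype K] [Field L] [Finite L]
    [Algebra K L] (x : L) : Algebra.trace K L (x ^ Fintype.card K) = Algebra.trace K L x :=
  Algebra.trace_eq_of_algEquiv (FiniteField.frobeniusAlgEquivOfAlgebraic K L) x

section CharTwo

variable {F : Type*} [Field F] [Finite F] [Algebra (ZMod 2) F]

theorem exists_sq_add_eq_iff_trace_eq_zero (c : F) :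
    (∃ b, b ^ 2 + b = c) ↔ Algebra.trace (ZMod 2) F c = 0 := by
  have := charP_of_injective_algebraMap (algebraMap (ZMod 2) F).injective 2
  let Tr : F →ₗ[ZMod 2] ZMod 2 := Algebra.trace (ZMod 2) F
  let φ : F →ₗ[ZMod 2] F := AddMonoidHom.toZModLinearMap 2
    { toFun := fun b => b ^ 2 + b
      map_zero' := by simp
      map_add' := fun x y => by simp only [add_sq, CharTwo.two_eq_zero]; ring }
  suffices LinearMap.range φ = LinearMap.ker Tr by
    rw [← LinearMap.mem_ker (f := Tr), ← this]; rfl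
  have hle : LinearMap.range φ ≤ LinearMap.ker Tr := by
    rintro _ ⟨b, rfl⟩
    show Algebra.trace (ZMod 2) F (b ^ 2 + b) = 0
    have hfrob := FiniteField.trace_algebra_pow_card (K := ZMod 2) b
    rw [ZMod.card] at hfrob
    rw [map_add, hfrob, CharTwo.add_self_eq_zero]
  -- `b ↦ b ^ 2 + b` has kernel `{0, 1}` and the trace is onto: both sides have codimension one
  have hker : Module.finrank (ZMod 2) (LinearMap.ker φ) ≤ 1 := by
    refine (Submodule.finrank_mono (t := Submodule.span (ZMod 2) {1}) fun b hb => ?_).trans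
      (finrank_span_le_card _ |>.trans_eq (Finset.card_singleton _))
    have hb : b * (b + 1) = 0 := by
      have hsq : b ^ 2 + b = 0 := LinearMap.mem_ker.1 hb
      linear_combination hsq
    rw [Submodule.mem_span_singleton]
    rcases mul_eq_zero.1 hb with rfl | hb1
    · exact ⟨0, zero_smul _ _⟩
    · exact ⟨1, by rw [one_smul, eq_neg_of_add_eq_zero_left hb1, CharTwo.neg_eq]⟩
  have hTr : Module.finrank (ZMod 2) (LinearMap.range Tr) = 1 := by
    rw [LinearMap.range_eq_top.2 (Algebra.trace_surjective (ZMod 2) F), finrank_top,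
      Module.finrank_self]
  refine Submodule.eq_of_le_of_finrank_le hle ?_
  have := φ.finrank_range_add_finrank_ker
  have := Tr.finrank_range_add_finrank_ker
  omega

theorem exists_eq_mul_sub_iff_trace_eq_zero (θ : F) {w₀ w₁ : F} (hw₀ : w₀ ≠ 0) :
    (∃ a, w₁ = w₀ * (a - θ * a ^ 2)) ↔ Algebra.trace (ZMod 2) F (w₁ * θ / w₀) = 0 := by
  have := charP_of_injective_algebraMap (algebraMap (ZMod 2) F).injective 2
  rcases eq_or_ne θ 0 with rfl | hθ
  · simp only [zero_mul, sub_zero, mul_zero, zero_div, map_zero, iff_true]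
    exact ⟨w₁ / w₀, by field_simp⟩
  rw [← exists_sq_add_eq_iff_trace_eq_zero]
  constructor
  · rintro ⟨a, rfl⟩
    refine ⟨θ * a, ?_⟩
    rw [show w₀ * (a - θ * a ^ 2) * θ / w₀ = θ * a - (θ * a) ^ 2 by field_simp,
      CharTwo.sub_eq_add, add_comm]
  · rintro ⟨b, hb⟩
    refine ⟨b / θ, ?_⟩
    calc w₁ = w₀ * (w₁ * θ / w₀) / θ := by field_simp
      _ = w₀ * (b - b ^ 2) / θ := by rw [← hb, CharTwo.sub_eq_add, add_comm]
      _ = w₀ * (b / θ - θ * (b / θ) ^ 2) := by field_simp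

theorem not_exists_eq_mul_sub_iff (θ w₀ w₁ : F) :
    (¬ ∃ a, w₁ = w₀ * (a - θ * a ^ 2)) ↔
      (w₀ = 0 ∧ w₁ ≠ 0) ∨ (w₀ ≠ 0 ∧ Algebra.trace (ZMod 2) F (w₁ * θ / w₀) = 1) := by
  rcases eq_or_ne w₀ 0 with rfl | hw₀
  · simp
  · rw [exists_eq_mul_sub_iff_trace_eq_zero θ hw₀]
    have : ∀ z : ZMod 2, z ≠ 0 ↔ z = 1 := by decide
    simp [hw₀, this]

end CharTwo

theorem deep_holes_char_two_k_eq_q_sub_two_general {F : Type*} [Field F] [Fintype F] [DecidableEq F]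
    [Algebra (ZMod 2) F] (q : ℕ) (hq : q = Fintype.card F) (hq8 : 8 ≤ q)
    (θ : F) (α : Fin q → F) (hα : Function.Bijective α) (u : Fin q → F) :
    IsDeepHole (TRS α (q - 2) θ) u ↔
      ∃ w₀ w₁ : F, ∃ g ∈ Sset F (q - 2) θ,
        (u = fun j => (Polynomial.C w₀ * Polynomial.X ^ (q - 1)
            + Polynomial.C w₁ * Polynomial.X ^ (q - 2) + g).eval (α j)) ∧
        ((w₀ = 0 ∧ w₁ ≠ 0) ∨
          (w₀ ≠ 0 ∧ Algebra.trace (ZMod 2) F (w₁ * θ / w₀) = 1)) := by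
  subst hq
  have := charP_of_injective_algebraMap (algebraMap (ZMod 2) F).injective 2
  rw [isDeepHole_TRS_iff θ hα (by omega), not_exists_eq_mul_sub_iff]
  have hrepr := Hmat_two_mulVec_eq_neg_iff θ hα (by omega) u
  generalize Hmat 2 θ α *ᵥ u = s at hrepr ⊢
  constructor
  · intro hs
    obtain ⟨g, hg, hu⟩ := (hrepr (s 0) (s 1)).1 <| by
      ext i; fin_cases i <;> simp [CharTwo.neg_eq]
    exact ⟨_, _, g, hg, hu, hs⟩
  · rintro ⟨w₀, w₁, g, hg, hu, hw⟩
    rw [(hrepr w₀ w₁).2 ⟨g, hg, hu⟩]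
    simpa [CharTwo.neg_eq] using hw

/-- Let `q = 2^m ≥ 8` and `k = q - 2`. Then `u ∈ 𝔽_q^q` is a deep hole of
`TRS_{q-2}(𝔽_q, θ)` iff `u = u_f` for some `f(x) = w_0 x^{q-1} + w_1 x^{q-2} + g(x)` with
`g ∈ S_{q-2,θ}` and either `w_0 = 0 ∧ w_1 ≠ 0`, or `w_0 ≠ 0` and `Tr(w_1 θ / w_0) = 1`,
where `Tr : 𝔽_q → 𝔽_2` is the absolute trace. -/
theorem deep_holes_char_two_k_eq_q_sub_two {F : Type*} [Field F] [Fintype F] [DecidableEq F]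
    [Algebra (ZMod 2) F] (q m : ℕ) (hq : q = Fintype.card F) (hqm : q = 2 ^ m) (hq8 : 8 ≤ q)
    (θ : F) (hθ : θ ≠ 0) (α : Fin q → F) (hα : Function.Bijective α) (u : Fin q → F) :
    IsDeepHole (TRS α (q - 2) θ) u ↔
      ∃ w₀ w₁ : F, ∃ g ∈ Sset F (q - 2) θ,
        (u = fun j => (Polynomial.C w₀ * Polynomial.X ^ (q - 1)
            + Polynomial.C w₁ * Polynomial.X ^ (q - 2) + g).eval (α j)) ∧
        ((w₀ = 0 ∧ w₁ ≠ 0) ∨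
          (w₀ ≠ 0 ∧ Algebra.trace (ZMod 2) F (w₁ * θ / w₀) = 1)) :=
  deep_holes_char_two_k_eq_q_sub_two_general q hq hq8 θ α hα u
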